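/- Corollary 2 (variation-adapted stepsizes): Let β ∈ [0, 1). Under the MOSP setting with ε > V̄, λ_1 = 0, and stepsizes α = μ = T^{(β−1)/2}, the dynamic fit satisfies Fit_T ≤ M + (2·G·R·T^{(1−β)/2} + (R²/2)·T^{1−β} + M²/2)/(ε − V̄), and the dynamic regret satisfies Reg_T ≤ R·V_x·T^{(1−β)/2} + λ̄_T·V_g + (R²/2)·T^{(1−β)/2} + (G²/2)·T^{(1+β)/2} + (M²/2)·(T+1)·T^{(β−1)/2}, where λ̄_T := M·T^{(β−1)/2} + (2·G·R + (R²/2)·T^{(1−β)/2} + (M²/2)·T^{(β−1)/2})/(ε − V̄). -/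

import Mathlib

open scoped RealInnerProductSpace
open Finset

/-!
Everything rests on a uniform bound on the multipliers. Testing the optimality of the primal
step against the Slater point gives `⟪λₜ, gₜ(xₜ)⟫ ≤ 2GR + R²/(2α) - (ε - V̄)‖λₜ‖`, so the
one-step drift of `‖λₜ‖²` is negative once `‖λₜ‖` exceeds
`C = (2GR + R²/(2α) + μM²/2)/(ε - V̄)`, while a single step raises `‖λₜ‖` by at most `μM`;
hence `‖λₜ‖ ≤ μM + C`. The dual update dominates `μ ∑ gₜ(xₜ)` entrywise, so the fit is at most
`‖λ_{T+1}‖/μ`. For the regret, the three-point inequality of the proximal step, the gradient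
inequality for `fₜ`, Young's inequality and the drift inequality bound `fₜ(xₜ) - fₜ(xₜ*)` by
`αG²/2 + μM²/2 + (μM + C)vₜ` plus two telescoping differences; summing and substituting
`α = μ = T^{(β-1)/2}` gives both bounds.
-/

noncomputable def posProj {m : ℕ} (v : EuclideanSpace ℝ (Fin m)) :
    EuclideanSpace ℝ (Fin m) := WithLp.toLp 2 (fun i => max (v i) 0)

section Entrywise

variable {ι : Type*} [Fintype ι]

theorem EuclideanSpace.norm_le_norm_of_abs_le {v w : EuclideanSpace ℝ ι}
    (h : ∀ i, |v i| ≤ |w i|) : ‖v‖ ≤ ‖w‖ := by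
  refine (sq_le_sq₀ (norm_nonneg v) (norm_nonneg w)).1 ?_
  simp only [EuclideanSpace.real_norm_sq_eq, ← sq_abs (v _), ← sq_abs (w _)]
  exact sum_le_sum fun i _ => pow_le_pow_left₀ (abs_nonneg _) (h i) 2

theorem EuclideanSpace.inner_le_inner_of_nonneg_of_le {l u w : EuclideanSpace ℝ ι}
    (hl : ∀ i, 0 ≤ l i) (h : ∀ i, u i ≤ w i) : ⟪l, u⟫ ≤ ⟪l, w⟫ := by
  simp only [PiLp.inner_apply, RCLike.inner_apply, conj_trivial]
  gcongr with i
  exacts [hl i, h i]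

theorem EuclideanSpace.norm_le_sum_of_nonneg {l : EuclideanSpace ℝ ι} (hl : ∀ i, 0 ≤ l i) :
    ‖l‖ ≤ ∑ i, l i := by
  refine (sq_le_sq₀ (norm_nonneg l) (sum_nonneg fun i _ => hl i)).1 ?_
  rw [EuclideanSpace.real_norm_sq_eq]
  exact sum_sq_le_sq_sum_of_nonneg fun i _ => hl i

theorem EuclideanSpace.inner_le_neg_mul_norm {l w : EuclideanSpace ℝ ι} {ε : ℝ}
    (hl : ∀ i, 0 ≤ l i) (hε : 0 ≤ ε) (hw : ∀ i, w i ≤ -ε) : ⟪l, w⟫ ≤ -ε * ‖l‖ := by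
  calc ⟪l, w⟫ ≤ ∑ i, w i * l i := by
        simp only [PiLp.inner_apply, RCLike.inner_apply, conj_trivial, le_refl]
    _ ≤ ∑ i, -ε * l i := by gcongr with i; exacts [hl i, hw i]
    _ = -ε * ∑ i, l i := (mul_sum ..).symm
    _ ≤ -ε * ‖l‖ := by
        have := EuclideanSpace.norm_le_sum_of_nonneg hl
        nlinarith

theorem EuclideanSpace.convexOn_inner_of_nonneg {E : Type*} [AddCommGroup E] [Module ℝ E]
    {s : Set E} {l : EuclideanSpace ℝ ι} {h : E → EuclideanSpace ℝ ι} (hs : Convex ℝ s)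
    (hl : ∀ i, 0 ≤ l i) (hh : ∀ i, ConvexOn ℝ s fun z => h z i) :
    ConvexOn ℝ s fun z => ⟪l, h z⟫ := by
  refine ⟨hs, fun a ha b hb p q hp hq hpq => ?_⟩
  calc ⟪l, h (p • a + q • b)⟫ ≤ ⟪l, p • h a + q • h b⟫ :=
        EuclideanSpace.inner_le_inner_of_nonneg_of_le hl fun i => by
          simpa using (hh i).2 ha hb hp hq hpq
    _ = p • ⟪l, h a⟫ + q • ⟪l, h b⟫ := by
        simp only [inner_add_right, real_inner_smul_right, smul_eq_mul]

end Entrywise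

section PosProj

variable {m : ℕ}

theorem posProj_apply (v : EuclideanSpace ℝ (Fin m)) (i : Fin m) :
    posProj v i = max (v i) 0 := rfl

theorem le_posProj (v : EuclideanSpace ℝ (Fin m)) (i : Fin m) : v i ≤ posProj v i :=
  le_max_left _ _

theorem posProj_nonneg (v : EuclideanSpace ℝ (Fin m)) (i : Fin m) : 0 ≤ posProj v i :=
  le_max_right _ _

theorem norm_posProj_le (v : EuclideanSpace ℝ (Fin m)) : ‖posProj v‖ ≤ ‖v‖ :=
  EuclideanSpace.norm_le_norm_of_abs_le fun i => by
    rw [posProj_apply, abs_of_nonneg (le_max_right _ _)]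
    exact max_le (le_abs_self _) (abs_nonneg _)

theorem norm_posProj_le_of_le {v w : EuclideanSpace ℝ (Fin m)} (h : ∀ i, v i ≤ w i)
    (hw : ∀ i, 0 ≤ w i) : ‖posProj v‖ ≤ ‖w‖ :=
  EuclideanSpace.norm_le_norm_of_abs_le fun i => by
    rw [abs_of_nonneg (posProj_nonneg v i), abs_of_nonneg (hw i)]
    exact max_le (h i) (hw i)

theorem inner_le_norm_mul_norm_posProj {l : EuclideanSpace ℝ (Fin m)} (hl : ∀ i, 0 ≤ l i)
    (d : EuclideanSpace ℝ (Fin m)) : ⟪l, d⟫ ≤ ‖l‖ * ‖posProj d‖ :=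
  (EuclideanSpace.inner_le_inner_of_nonneg_of_le hl (le_posProj d)).trans (real_inner_le_norm _ _)

theorem sq_norm_posProj_add_smul_le (l y : EuclideanSpace ℝ (Fin m)) (μ : ℝ) :
    ‖posProj (l + μ • y)‖ ^ 2 ≤ ‖l‖ ^ 2 + 2 * μ * ⟪l, y⟫ + μ ^ 2 * ‖y‖ ^ 2 := by
  calc ‖posProj (l + μ • y)‖ ^ 2 ≤ ‖l + μ • y‖ ^ 2 := by gcongr; exact norm_posProj_le _
    _ = ‖l‖ ^ 2 + 2 * μ * ⟪l, y⟫ + μ ^ 2 * ‖y‖ ^ 2 := by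
        rw [norm_add_sq_real, real_inner_smul_right, norm_smul, Real.norm_eq_abs, mul_pow,
          sq_abs]
        ring

end PosProj

section Convex

variable {E : Type*} [NormedAddCommGroup E] [InnerProductSpace ℝ E]

theorem ConvexOn.add_inner_gradient_le [CompleteSpace E] {f : E → ℝ}
    (hf : ConvexOn ℝ Set.univ f) {x : E} (hfx : DifferentiableAt ℝ f x) (y : E) :
    f x + ⟪gradient f x, y - x⟫ ≤ f y := by
  let γ : ℝ →ᵃ[ℝ] E := AffineMap.lineMap x y
  have hline : HasDerivAt (f ∘ γ) ⟪gradient f x, y - x⟫ 0 := by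
    have hfγ : HasFDerivAt f (InnerProductSpace.toDual ℝ E (gradient f x)) (γ 0) := by
      simpa [γ] using hfx.hasGradientAt.hasFDerivAt
    simpa using hfγ.comp_hasDerivAt 0 AffineMap.hasDerivAt_lineMap
  have := (hf.comp_affineMap γ).le_slope_of_hasDerivAt
    (Set.mem_univ 0) (Set.mem_univ 1) one_pos hline
  simp only [slope_def_field, Function.comp_apply, γ, AffineMap.lineMap_apply_zero,
    AffineMap.lineMap_apply_one, sub_zero, div_one] at this
  linarith

theorem neg_inner_le_of_norm_le {d : E} (u : E) {G α : ℝ} (hd : ‖d‖ ≤ G) (hα : 0 < α) :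
    -⟪d, u⟫ ≤ α * G ^ 2 / 2 + ‖u‖ ^ 2 / (2 * α) := by
  have hGu : -⟪d, u⟫ ≤ G * ‖u‖ :=
    (neg_le_abs _).trans ((abs_real_inner_le_norm _ _).trans (by gcongr))
  have hsq : α * G ^ 2 / 2 + ‖u‖ ^ 2 / (2 * α) - G * ‖u‖ = (α * G - ‖u‖) ^ 2 / (2 * α) := by
    field_simp
    ring
  have : 0 ≤ (α * G - ‖u‖) ^ 2 / (2 * α) := by positivity
  linarith

theorem convexOn_inner_sub {X : Set E} (hX : Convex ℝ X) (d c : E) :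
    ConvexOn ℝ X fun z => ⟪d, z - c⟫ := by
  refine (((innerₛₗ ℝ d).convexOn hX).add_const (-⟪d, c⟫)).congr fun z _ => ?_
  simp only [Pi.add_apply, innerₛₗ_apply_apply, sub_eq_add_neg, inner_add_right, inner_neg_right]

open Filter Topology in
theorem nonneg_of_forall_add_mul_nonneg {a b : ℝ} (h : ∀ θ ∈ Set.Ioo (0 : ℝ) 1, 0 ≤ a + θ * b) :
    0 ≤ a := by
  have hlim : Tendsto (fun θ : ℝ => a + θ * b) (𝓝[>] 0) (𝓝 a) := by
    have hcont : Continuous fun θ : ℝ => a + θ * b := by fun_prop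
    exact (hcont.tendsto' 0 a (by simp)).mono_left nhdsWithin_le_nhds
  exact ge_of_tendsto hlim (eventually_of_mem (Ioo_mem_nhdsGT one_pos) h)

variable {X : Set E} {φ : E → ℝ} {c xp z : E} {α : ℝ}

theorem ConvexOn.le_add_inner_of_isMinOn_prox (hφ : ConvexOn ℝ X φ) (hα : 0 < α)
    (hxp : xp ∈ X) (hmin : IsMinOn (fun w => φ w + ‖w - c‖ ^ 2 / (2 * α)) X xp) (hz : z ∈ X) :
    φ xp ≤ φ z + ⟪xp - c, z - xp⟫ / α := by
  suffices h : 0 ≤ φ z - φ xp + ⟪xp - c, z - xp⟫ / α by linarith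
  refine nonneg_of_forall_add_mul_nonneg (b := ‖z - xp‖ ^ 2 / (2 * α)) fun θ ⟨hθ0, hθ1⟩ => ?_
  have hw : xp + θ • (z - xp) ∈ X := hφ.1.add_smul_sub_mem hxp hz ⟨hθ0.le, hθ1.le⟩
  have hconv : φ (xp + θ • (z - xp)) ≤ (1 - θ) * φ xp + θ * φ z := by
    have := hφ.2 hxp hz (sub_nonneg.2 hθ1.le) hθ0.le (sub_add_cancel 1 θ)
    rwa [show (1 - θ) • xp + θ • z = xp + θ • (z - xp) by module] at this
  have hnorm : ‖xp + θ • (z - xp) - c‖ ^ 2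
      = ‖xp - c‖ ^ 2 + (2 * θ * ⟪xp - c, z - xp⟫ + θ ^ 2 * ‖z - xp‖ ^ 2) := by
    rw [show xp + θ • (z - xp) - c = (xp - c) + θ • (z - xp) by abel, norm_add_sq_real,
      real_inner_smul_right, norm_smul, mul_pow, Real.norm_eq_abs, sq_abs]
    ring
  have hopt := isMinOn_iff.1 hmin _ hw
  simp only [hnorm, add_div (‖xp - c‖ ^ 2)] at hopt
  refine (mul_nonneg_iff_of_pos_left hθ0).1 ?_
  have key : θ * (φ z - φ xp + ⟪xp - c, z - xp⟫ / α + θ * (‖z - xp‖ ^ 2 / (2 * α)))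
      = θ * φ z - θ * φ xp + (2 * θ * ⟪xp - c, z - xp⟫ + θ ^ 2 * ‖z - xp‖ ^ 2) / (2 * α) := by
    field_simp
    ring
  rw [key]
  linarith

theorem ConvexOn.add_sq_norm_le_of_isMinOn_prox (hφ : ConvexOn ℝ X φ) (hα : 0 < α)
    (hxp : xp ∈ X) (hmin : IsMinOn (fun w => φ w + ‖w - c‖ ^ 2 / (2 * α)) X xp) (hz : z ∈ X) :
    φ xp + ‖xp - c‖ ^ 2 / (2 * α) + ‖z - xp‖ ^ 2 / (2 * α) ≤ φ z + ‖z - c‖ ^ 2 / (2 * α) := by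
  have hvi := hφ.le_add_inner_of_isMinOn_prox hα hxp hmin hz
  have hsplit : ‖z - c‖ ^ 2 = ‖z - xp‖ ^ 2 + 2 * ⟪z - xp, xp - c⟫ + ‖xp - c‖ ^ 2 := by
    rw [← norm_add_sq_real, sub_add_sub_cancel]
  rw [hsplit, real_inner_comm]
  field_simp at hvi ⊢
  linarith

end Convex

theorem le_of_sq_drift_le {a : ℕ → ℝ} {μ M B κ : ℝ} (hμ : 0 < μ) (hκ : 0 < κ) (hM : 0 ≤ M)
    (hB : 0 ≤ B) (ha : ∀ t, 0 ≤ a t) (ha₁ : a 1 = 0)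
    (hstep : ∀ t, 1 ≤ t → a (t + 1) ≤ a t + μ * M)
    (hdrift : ∀ t, 1 ≤ t → a (t + 1) ^ 2 ≤ a t ^ 2 + 2 * μ * (B - κ * a t) + μ ^ 2 * M ^ 2) :
    ∀ t, 1 ≤ t → a t ≤ μ * M + (B + μ * M ^ 2 / 2) / κ := by
  set C := (B + μ * M ^ 2 / 2) / κ
  have hC : κ * C = B + μ * M ^ 2 / 2 := mul_div_cancel₀ _ hκ.ne'
  refine Nat.le_induction (by rw [ha₁]; positivity) fun t ht ih => ?_
  rcases le_or_gt (a t) C with hle | hgt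
  · linarith [hstep t ht]
  · have hneg : 2 * μ * (B - κ * a t) + μ ^ 2 * M ^ 2 < 0 := by
      have : κ * C < κ * a t := mul_lt_mul_of_pos_left hgt hκ
      nlinarith
    have hsq : a (t + 1) ^ 2 ≤ a t ^ 2 := by linarith [hdrift t ht]
    exact (abs_le_of_sq_le_sq hsq (ha t) |>.trans' (le_abs_self _)).trans ih

section VirtualQueue

variable {m : ℕ} {lam y : ℕ → EuclideanSpace ℝ (Fin m)} {μ : ℝ}

theorem nonneg_of_posProj_recursion (h₁ : lam 1 = 0)
    (hsucc : ∀ t, 1 ≤ t → lam (t + 1) = posProj (lam t + μ • y t)) :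
    ∀ t, 1 ≤ t → ∀ i, 0 ≤ lam t i := by
  refine Nat.le_induction (by simp [h₁]) fun t ht _ i => ?_
  rw [hsucc t ht]
  exact posProj_nonneg _ i

theorem smul_sum_le_of_posProj_recursion (h₁ : lam 1 = 0)
    (hsucc : ∀ t, 1 ≤ t → lam (t + 1) = posProj (lam t + μ • y t)) (T : ℕ) (i : Fin m) :
    μ * ∑ t ∈ Icc 1 T, y t i ≤ lam (T + 1) i := by
  induction T with
  | zero => simp [h₁]
  | succ T ih =>
    have hstep : lam (T + 1) i + μ * y (T + 1) i ≤ lam (T + 1 + 1) i := by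
      rw [hsucc (T + 1) T.succ_pos]
      simpa using le_posProj (lam (T + 1) + μ • y (T + 1)) i
    rw [sum_Icc_succ_top (Nat.le_add_left 1 T), mul_add]
    linarith

theorem norm_posProj_sum_le_of_posProj_recursion (hμ : 0 < μ) (h₁ : lam 1 = 0)
    (hsucc : ∀ t, 1 ≤ t → lam (t + 1) = posProj (lam t + μ • y t)) (T : ℕ) :
    ‖posProj (∑ t ∈ Icc 1 T, y t)‖ ≤ ‖lam (T + 1)‖ / μ := by
  have hle : ∀ i, (∑ t ∈ Icc 1 T, y t) i ≤ (μ⁻¹ • lam (T + 1)) i := fun i => by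
    rw [WithLp.ofLp_sum, Finset.sum_apply, PiLp.smul_apply, smul_eq_mul, le_inv_mul_iff₀ hμ]
    exact smul_sum_le_of_posProj_recursion h₁ hsucc T i
  have hnonneg : ∀ i, 0 ≤ (μ⁻¹ • lam (T + 1)) i := fun i =>
    mul_nonneg (inv_nonneg.2 hμ.le) (nonneg_of_posProj_recursion h₁ hsucc _ T.succ_pos i)
  calc ‖posProj (∑ t ∈ Icc 1 T, y t)‖ ≤ ‖μ⁻¹ • lam (T + 1)‖ := norm_posProj_le_of_le hle hnonneg
    _ = ‖lam (T + 1)‖ / μ := by rw [norm_smul, norm_inv, Real.norm_of_nonneg hμ.le, inv_mul_eq_div]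

end VirtualQueue

theorem sum_Icc_one_sub_succ (F : ℕ → ℝ) (T : ℕ) :
    ∑ t ∈ Icc 1 T, (F t - F (t + 1)) = F 1 - F (T + 1) := by
  induction T with
  | zero => simp
  | succ T ih => rw [sum_Icc_succ_top (Nat.le_add_left 1 T), ih]; ring

theorem sum_sq_norm_sub_sub_le {E : Type*} [SeminormedAddCommGroup E] {a b : ℕ → E} {R : ℝ}
    {T : ℕ} (hR : ∀ s ≤ T, ∀ t, ‖a s - b t‖ ≤ R) :
    ∑ t ∈ Icc 1 T, (‖a t - b t‖ ^ 2 - ‖a t - b (t + 1)‖ ^ 2)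
      ≤ 2 * R * ∑ t ∈ Icc 1 T, ‖a t - a (t - 1)‖ + R ^ 2 := by
  have hterm : ∀ t ∈ Icc 1 T, ‖a t - b t‖ ^ 2 - ‖a t - b (t + 1)‖ ^ 2
      ≤ (‖a (t - 1) - b t‖ ^ 2 - ‖a (t + 1 - 1) - b (t + 1)‖ ^ 2)
        + 2 * R * ‖a t - a (t - 1)‖ := fun t ht => by
    obtain ⟨ht1, htT⟩ := mem_Icc.1 ht
    have h₁ := hR t htT t
    have h₂ := hR (t - 1) (by omega) t
    have hdiff : ‖a t - b t‖ - ‖a (t - 1) - b t‖ ≤ ‖a t - a (t - 1)‖ := by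
      simpa using norm_sub_norm_le (a t - b t) (a (t - 1) - b t)
    rw [Nat.add_sub_cancel]
    nlinarith [mul_le_mul_of_nonneg_left hdiff
        (add_nonneg (norm_nonneg (a t - b t)) (norm_nonneg (a (t - 1) - b t))),
      mul_nonneg (by linarith : 0 ≤ 2 * R - ‖a t - b t‖ - ‖a (t - 1) - b t‖)
        (norm_nonneg (a t - a (t - 1)))]
  calc _ ≤ ∑ t ∈ Icc 1 T, ((‖a (t - 1) - b t‖ ^ 2 - ‖a (t + 1 - 1) - b (t + 1)‖ ^ 2)
        + 2 * R * ‖a t - a (t - 1)‖) := sum_le_sum hterm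
    _ = ‖a 0 - b 1‖ ^ 2 - ‖a T - b (T + 1)‖ ^ 2 + 2 * R * ∑ t ∈ Icc 1 T, ‖a t - a (t - 1)‖ := by
        rw [sum_add_distrib, sum_Icc_one_sub_succ (fun t => ‖a (t - 1) - b t‖ ^ 2), mul_sum]
        rfl
    _ ≤ _ := by
        have h0 := hR 0 (Nat.zero_le T) 1
        nlinarith [norm_nonneg (a 0 - b 1), sq_nonneg ‖a T - b (T + 1)‖]

section MOSP

variable {E : Type*} [NormedAddCommGroup E] [InnerProductSpace ℝ E] [CompleteSpace E] {m : ℕ}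

structure IsMOSPRun (X : Set E) (f : ℕ → E → ℝ) (g : ℕ → E → EuclideanSpace ℝ (Fin m))
    (α μ : ℝ) (x : ℕ → E) (lam : ℕ → EuclideanSpace ℝ (Fin m)) : Prop where
  mem : ∀ t, x t ∈ X
  lam_one : lam 1 = 0
  isMinOn : ∀ t, IsMinOn (fun z => ⟪gradient (f t) (x t), z - x t⟫ + ⟪lam (t + 1), g t z⟫ +
    ‖z - x t‖ ^ 2 / (2 * α)) X (x (t + 1))
  lam_succ : ∀ t, 1 ≤ t → lam (t + 1) = posProj (lam t + μ • g t (x t))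

namespace IsMOSPRun

variable {X : Set E} {f : ℕ → E → ℝ} {g : ℕ → E → EuclideanSpace ℝ (Fin m)} {α μ R G M : ℝ}
  {x : ℕ → E} {lam : ℕ → EuclideanSpace ℝ (Fin m)}

theorem lam_nonneg (run : IsMOSPRun X f g α μ x lam) : ∀ t, 1 ≤ t → ∀ i, 0 ≤ lam t i :=
  nonneg_of_posProj_recursion run.lam_one run.lam_succ

theorem norm_lam_succ_le (run : IsMOSPRun X f g α μ x lam) (hμ : 0 ≤ μ) {t : ℕ} (ht : 1 ≤ t)
    (hM : ‖g t (x t)‖ ≤ M) : ‖lam (t + 1)‖ ≤ ‖lam t‖ + μ * M := by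
  rw [run.lam_succ t ht]
  calc ‖posProj (lam t + μ • g t (x t))‖ ≤ ‖lam t‖ + ‖μ • g t (x t)‖ :=
        (norm_posProj_le _).trans (norm_add_le _ _)
    _ ≤ ‖lam t‖ + μ * M := by rw [norm_smul, Real.norm_of_nonneg hμ]; gcongr

theorem sq_norm_lam_succ_le (run : IsMOSPRun X f g α μ x lam) {t : ℕ} (ht : 1 ≤ t)
    (hM : ‖g t (x t)‖ ≤ M) :
    ‖lam (t + 1)‖ ^ 2 ≤ ‖lam t‖ ^ 2 + 2 * μ * ⟪lam t, g t (x t)⟫ + μ ^ 2 * M ^ 2 := by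
  rw [run.lam_succ t ht]
  refine (sq_norm_posProj_add_smul_le _ _ μ).trans ?_
  gcongr

theorem inner_lam_le (run : IsMOSPRun X f g α μ x lam) (hR : ∀ y ∈ X, ∀ z ∈ X, ‖y - z‖ ≤ R)
    (t : ℕ) (hG : ‖gradient (f t) (x t)‖ ≤ G) {xs : E} (hxs : xs ∈ X) {ε : ℝ} (hε : 0 ≤ ε)
    (hslater : ∀ i, g t xs i ≤ -ε) {V : ℝ}
    (hV : ‖posProj (g (t + 1) (x (t + 1)) - g t (x (t + 1)))‖ ≤ V) (hα : 0 < α) :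
    ⟪lam (t + 1), g (t + 1) (x (t + 1))⟫
      ≤ 2 * G * R + R ^ 2 / (2 * α) - (ε - V) * ‖lam (t + 1)‖ := by
  have hl := run.lam_nonneg (t + 1) (Nat.le_add_left 1 t)
  have hGR : ∀ y ∈ X, |⟪gradient (f t) (x t), y - x t⟫| ≤ G * R := fun y hy =>
    (abs_real_inner_le_norm _ _).trans
      (mul_le_mul hG (hR y hy _ (run.mem t)) (norm_nonneg _) ((norm_nonneg _).trans hG))
  have hopt := isMinOn_iff.1 (run.isMinOn t) xs hxs
  have hslater' := EuclideanSpace.inner_le_neg_mul_norm hl hε hslater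
  have hdist : ‖xs - x t‖ ^ 2 / (2 * α) ≤ R ^ 2 / (2 * α) := by
    have := hR _ hxs _ (run.mem t)
    gcongr
  have hvar : ⟪lam (t + 1), g (t + 1) (x (t + 1))⟫ - ⟪lam (t + 1), g t (x (t + 1))⟫
      ≤ ‖lam (t + 1)‖ * V := by
    rw [← inner_sub_right]
    exact (inner_le_norm_mul_norm_posProj hl _).trans (by gcongr)
  have hstep : 0 ≤ ‖x (t + 1) - x t‖ ^ 2 / (2 * α) := by positivity
  have h₁ := (abs_le.1 (hGR _ (run.mem (t + 1)))).1
  have h₂ := (abs_le.1 (hGR _ hxs)).2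
  linarith

theorem norm_lam_le (run : IsMOSPRun X f g α μ x lam) (hR : ∀ y ∈ X, ∀ z ∈ X, ‖y - z‖ ≤ R)
    (hG : ∀ t, ∀ y ∈ X, ‖gradient (f t) y‖ ≤ G) (hM : ∀ t, ∀ y ∈ X, ‖g t y‖ ≤ M)
    {xs : E} (hxs : xs ∈ X) {ε : ℝ} (hε : 0 ≤ ε) (hslater : ∀ t i, g t xs i ≤ -ε) {V : ℝ}
    (hvar : ∀ t, ∀ y ∈ X, ‖posProj (g (t + 1) y - g t y)‖ ≤ V) (hεV : V < ε)
    (hα : 0 < α) (hμ : 0 < μ) :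
    ∀ t, 1 ≤ t → ‖lam t‖ ≤ μ * M + (2 * G * R + R ^ 2 / (2 * α) + μ * M ^ 2 / 2) / (ε - V) := by
  have hG0 : 0 ≤ G := (norm_nonneg _).trans (hG 0 xs hxs)
  have hR0 : 0 ≤ R := (norm_nonneg _).trans (hR xs hxs xs hxs)
  have hM0 : 0 ≤ M := (norm_nonneg _).trans (hM 0 xs hxs)
  refine le_of_sq_drift_le (a := fun t => ‖lam t‖) hμ (sub_pos.2 hεV) hM0 (by positivity)
    (fun t => norm_nonneg _) (by simp [run.lam_one])
    (fun t ht => run.norm_lam_succ_le hμ.le ht (hM t _ (run.mem t))) fun t ht => ?_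
  obtain ⟨s, rfl⟩ : ∃ s, t = s + 1 := ⟨t - 1, by omega⟩
  have hinner := run.inner_lam_le hR s (hG s _ (run.mem s)) hxs hε (hslater s)
    (hvar s _ (run.mem (s + 1))) hα
  have hdrift := run.sq_norm_lam_succ_le ht (hM _ _ (run.mem (s + 1)))
  nlinarith [mul_le_mul_of_nonneg_left hinner (by positivity : 0 ≤ 2 * μ)]

theorem sub_le_of_feasible (run : IsMOSPRun X f g α μ x lam) (hX : Convex ℝ X) {t : ℕ}
    (hf : ConvexOn ℝ Set.univ (f t)) (hfd : DifferentiableAt ℝ (f t) (x t))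
    (hg : ∀ i, ConvexOn ℝ Set.univ fun z => g t z i) (hG : ‖gradient (f t) (x t)‖ ≤ G)
    (hM : ‖g (t + 1) (x (t + 1))‖ ≤ M) {xs : E} (hxs : xs ∈ X) (hfeas : ∀ i, g t xs i ≤ 0)
    {v : ℝ} (hv : ‖posProj (g (t + 1) (x (t + 1)) - g t (x (t + 1)))‖ ≤ v) {L : ℝ}
    (hL : ‖lam (t + 1)‖ ≤ L) (hα : 0 < α) (hμ : 0 < μ) :
    f t (x t) - f t xs ≤ α * G ^ 2 / 2 + μ * M ^ 2 / 2 + L * v +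
      (‖xs - x t‖ ^ 2 - ‖xs - x (t + 1)‖ ^ 2) / (2 * α) +
      (‖lam (t + 1)‖ ^ 2 - ‖lam (t + 1 + 1)‖ ^ 2) / (2 * μ) := by
  set d := gradient (f t) (x t)
  have hl := run.lam_nonneg (t + 1) (Nat.le_add_left 1 t)
  have hφ := (convexOn_inner_sub hX d (x t)).add
    (EuclideanSpace.convexOn_inner_of_nonneg hX hl fun i => (hg i).subset (Set.subset_univ X) hX)
  have hprox := hφ.add_sq_norm_le_of_isMinOn_prox hα (run.mem (t + 1)) (run.isMinOn t) hxs
  have hgrad : f t (x t) + ⟪d, xs - x t⟫ ≤ f t xs := hf.add_inner_gradient_le hfd xs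
  have hyoung := neg_inner_le_of_norm_le (x (t + 1) - x t) hG hα
  have hdrift : -⟪lam (t + 1), g (t + 1) (x (t + 1))⟫
      ≤ (‖lam (t + 1)‖ ^ 2 - ‖lam (t + 1 + 1)‖ ^ 2) / (2 * μ) + μ * M ^ 2 / 2 := by
    have := run.sq_norm_lam_succ_le (Nat.le_add_left 1 t) hM
    rw [div_add' _ _ _ (by positivity), le_div_iff₀ (by positivity)]
    linarith
  have hvar : ⟪lam (t + 1), g (t + 1) (x (t + 1))⟫ - ⟪lam (t + 1), g t (x (t + 1))⟫ ≤ L * v := by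
    rw [← inner_sub_right]
    exact (inner_le_norm_mul_norm_posProj hl _).trans
      (mul_le_mul hL hv (norm_nonneg _) ((norm_nonneg _).trans hL))
  have hfeas' : ⟪lam (t + 1), g t xs⟫ ≤ 0 := by
    simpa using EuclideanSpace.inner_le_inner_of_nonneg_of_le (w := 0) hl hfeas
  simp only [Pi.add_apply] at hprox
  rw [sub_div] at hdrift
  rw [sub_div, sub_div]
  linarith

theorem regret_le (run : IsMOSPRun X f g α μ x lam) (hX : Convex ℝ X)
    (hf : ∀ t, ConvexOn ℝ Set.univ (f t)) (hfd : ∀ t, Differentiable ℝ (f t))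
    (hg : ∀ t i, ConvexOn ℝ Set.univ fun z => g t z i) (hR : ∀ y ∈ X, ∀ z ∈ X, ‖y - z‖ ≤ R)
    (hG : ∀ t, ∀ y ∈ X, ‖gradient (f t) y‖ ≤ G) (hM : ∀ t, ∀ y ∈ X, ‖g t y‖ ≤ M)
    {T : ℕ} {xstar : ℕ → E} (hxstar : ∀ t ≤ T, xstar t ∈ X)
    (hfeas : ∀ t ∈ Icc 1 T, ∀ i, g t (xstar t) i ≤ 0) {v : ℕ → ℝ}
    (hv : ∀ t, ∀ y ∈ X, ‖posProj (g (t + 1) y - g t y)‖ ≤ v t) {L : ℝ}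
    (hL : ∀ t, 1 ≤ t → ‖lam t‖ ≤ L) (hα : 0 < α) (hμ : 0 < μ) :
    ∑ t ∈ Icc 1 T, f t (x t) - ∑ t ∈ Icc 1 T, f t (xstar t)
      ≤ T * (α * G ^ 2 / 2 + μ * M ^ 2 / 2) + L * ∑ t ∈ Icc 1 T, v t +
        (2 * R * ∑ t ∈ Icc 1 T, ‖xstar t - xstar (t - 1)‖ + R ^ 2) / (2 * α) +
        μ * M ^ 2 / 2 := by
  have hslot : ∀ t ∈ Icc 1 T, f t (x t) - f t (xstar t) ≤ α * G ^ 2 / 2 + μ * M ^ 2 / 2 +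
      L * v t + (‖xstar t - x t‖ ^ 2 - ‖xstar t - x (t + 1)‖ ^ 2) / (2 * α) +
      (‖lam (t + 1)‖ ^ 2 - ‖lam (t + 1 + 1)‖ ^ 2) / (2 * μ) := fun t ht =>
    run.sub_le_of_feasible hX (hf t) (hfd t _) (hg t) (hG t _ (run.mem t))
      (hM _ _ (run.mem _)) (hxstar t (mem_Icc.1 ht).2) (hfeas t ht) (hv t _ (run.mem _))
      (hL _ (Nat.le_add_left 1 t)) hα hμ
  have hx := sum_sq_norm_sub_sub_le fun s hs t => hR _ (hxstar s hs) _ (run.mem t)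
  have hlam : ∑ t ∈ Icc 1 T, (‖lam (t + 1)‖ ^ 2 - ‖lam (t + 1 + 1)‖ ^ 2) ≤ (μ * M) ^ 2 := by
    rw [sum_Icc_one_sub_succ fun t => ‖lam (t + 1)‖ ^ 2]
    have h₂ : ‖lam (1 + 1)‖ ≤ μ * M := by
      simpa [run.lam_one] using run.norm_lam_succ_le hμ.le le_rfl (hM 1 _ (run.mem 1))
    nlinarith [norm_nonneg (lam (1 + 1)), sq_nonneg ‖lam (T + 1 + 1)‖]
  calc ∑ t ∈ Icc 1 T, f t (x t) - ∑ t ∈ Icc 1 T, f t (xstar t)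
      = ∑ t ∈ Icc 1 T, (f t (x t) - f t (xstar t)) := (sum_sub_distrib ..).symm
    _ ≤ ∑ t ∈ Icc 1 T, (α * G ^ 2 / 2 + μ * M ^ 2 / 2 + L * v t +
          (‖xstar t - x t‖ ^ 2 - ‖xstar t - x (t + 1)‖ ^ 2) / (2 * α) +
          (‖lam (t + 1)‖ ^ 2 - ‖lam (t + 1 + 1)‖ ^ 2) / (2 * μ)) := sum_le_sum hslot
    _ = T * (α * G ^ 2 / 2 + μ * M ^ 2 / 2) + L * ∑ t ∈ Icc 1 T, v t +
          (∑ t ∈ Icc 1 T, (‖xstar t - x t‖ ^ 2 - ‖xstar t - x (t + 1)‖ ^ 2)) / (2 * α) +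
          (∑ t ∈ Icc 1 T, (‖lam (t + 1)‖ ^ 2 - ‖lam (t + 1 + 1)‖ ^ 2)) / (2 * μ) := by
        simp only [sum_add_distrib, sum_const, Nat.card_Icc, Nat.add_sub_cancel, nsmul_eq_mul,
          ← mul_sum, ← sum_div]
        ring
    _ ≤ T * (α * G ^ 2 / 2 + μ * M ^ 2 / 2) + L * ∑ t ∈ Icc 1 T, v t +
          (2 * R * ∑ t ∈ Icc 1 T, ‖xstar t - xstar (t - 1)‖ + R ^ 2) / (2 * α) +
          (μ * M) ^ 2 / (2 * μ) := by gcongr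
    _ = _ := by field_simp

end IsMOSPRun

end MOSP

theorem mosp_variation_adapted_bounds_general {n m : ℕ}
    (T : ℕ) (hT : 1 ≤ T)
    (X : Set (EuclideanSpace ℝ (Fin n))) (hXconv : Convex ℝ X)
    (R G M ε Vbar α μ : ℝ)
    (hR : ∀ x ∈ X, ∀ y ∈ X, ‖x - y‖ ≤ R)
    (f : ℕ → EuclideanSpace ℝ (Fin n) → ℝ)
    (hfconv : ∀ t, ConvexOn ℝ Set.univ (f t))
    (hfdiff : ∀ t, Differentiable ℝ (f t))
    (hG : ∀ t, ∀ x ∈ X, ‖gradient (f t) x‖ ≤ G)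
    (g : ℕ → EuclideanSpace ℝ (Fin n) → EuclideanSpace ℝ (Fin m))
    (hgconv : ∀ t i, ConvexOn ℝ Set.univ fun x => g t x i)
    (hM : ∀ t, ∀ x ∈ X, ‖g t x‖ ≤ M)
    (hε : 0 < ε)
    (hSlater : ∃ xt ∈ X, ∀ t, ∀ i, g t xt i ≤ -ε)
    (hvar : ∀ t, ∀ x ∈ X, ‖posProj (g (t + 1) x - g t x)‖ ≤ Vbar)
    (hεV : Vbar < ε)
    (hα : 0 < α) (hμ : 0 < μ)
    (β : ℝ)
    (hαT : α = (T : ℝ) ^ ((β - 1) / 2)) (hμT : μ = (T : ℝ) ^ ((β - 1) / 2))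
    (x : ℕ → EuclideanSpace ℝ (Fin n))
    (lam : ℕ → EuclideanSpace ℝ (Fin m))
    (hx0 : x 0 ∈ X) (hlam1 : lam 1 = 0)
    (hprimal : ∀ t, 1 ≤ t → x t ∈ X ∧ ∀ z ∈ X,
      ⟪gradient (f (t - 1)) (x (t - 1)), x t - x (t - 1)⟫ + ⟪lam t, g (t - 1) (x t)⟫ +
          ‖x t - x (t - 1)‖ ^ 2 / (2 * α) ≤
        ⟪gradient (f (t - 1)) (x (t - 1)), z - x (t - 1)⟫ + ⟪lam t, g (t - 1) z⟫ +
          ‖z - x (t - 1)‖ ^ 2 / (2 * α))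
    (hdual : ∀ t, 1 ≤ t → lam (t + 1) = posProj (lam t + μ • g t (x t)))
    (xstar : ℕ → EuclideanSpace ℝ (Fin n))
    (hxstar0 : xstar 0 ∈ X)
    (hxstar : ∀ t, 1 ≤ t → t ≤ T → xstar t ∈ X ∧ (∀ i, g t (xstar t) i ≤ 0) ∧
      ∀ z ∈ X, (∀ i, g t z i ≤ 0) → f t (xstar t) ≤ f t z)
    (v : ℕ → ℝ)
    (hvarv : ∀ t, ∀ x ∈ X, ‖posProj (g (t + 1) x - g t x)‖ ≤ v t) :
    (‖posProj (∑ t ∈ Icc 1 T, g t (x t))‖ ≤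
      M + (2 * G * R * (T : ℝ) ^ ((1 - β) / 2) + R ^ 2 / 2 * (T : ℝ) ^ (1 - β) +
        M ^ 2 / 2) / (ε - Vbar)) ∧
    (∑ t ∈ Icc 1 T, f t (x t) - ∑ t ∈ Icc 1 T, f t (xstar t) ≤
      R * (∑ t ∈ Icc 1 T, ‖xstar t - xstar (t - 1)‖) * (T : ℝ) ^ ((1 - β) / 2) +
        (M * (T : ℝ) ^ ((β - 1) / 2) +
          (2 * G * R + R ^ 2 / 2 * (T : ℝ) ^ ((1 - β) / 2) +
            M ^ 2 / 2 * (T : ℝ) ^ ((β - 1) / 2)) / (ε - Vbar)) *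
          (∑ t ∈ Icc 1 T, v t) +
        R ^ 2 / 2 * (T : ℝ) ^ ((1 - β) / 2) + G ^ 2 / 2 * (T : ℝ) ^ ((1 + β) / 2) +
        M ^ 2 / 2 * ((T : ℝ) + 1) * (T : ℝ) ^ ((β - 1) / 2)) := by
  obtain ⟨xs, hxsX, hxs⟩ := hSlater
  have run : IsMOSPRun X f g α μ x lam :=
    ⟨fun t => t.casesOn hx0 fun s => (hprimal (s + 1) s.succ_pos).1, hlam1,
      fun t => isMinOn_iff.2 (hprimal (t + 1) t.succ_pos).2, hdual⟩
  have hlam := run.norm_lam_le hR hG hM hxsX hε.le hxs hvar hεV hα hμ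
  have hfit := (norm_posProj_sum_le_of_posProj_recursion hμ hlam1 hdual T).trans
    (div_le_div_of_nonneg_right (hlam (T + 1) (Nat.le_add_left 1 T)) hμ.le)
  have hreg := run.regret_le hXconv hfconv hfdiff hgconv hR hG hM
    (fun t ht => t.eq_zero_or_pos.elim (· ▸ hxstar0) fun h => (hxstar t h ht).1)
    (fun t ht => (hxstar t (mem_Icc.1 ht).1 (mem_Icc.1 ht).2).2.1) hvarv hlam hα hμ
  have hT0 : (0 : ℝ) < T := by exact_mod_cast hT
  have hP : (T : ℝ) ^ ((1 - β) / 2) = α⁻¹ := by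
    rw [hαT, ← Real.rpow_neg hT0.le]; ring_nf
  have hP2 : (T : ℝ) ^ (1 - β) = α⁻¹ ^ 2 := by
    rw [← hP, ← Real.rpow_mul_natCast hT0.le]; ring_nf
  have hT' : (T : ℝ) ^ ((1 + β) / 2) = T * α := by
    rw [hαT, mul_comm, ← Real.rpow_add_one hT0.ne']; ring_nf
  obtain rfl : μ = α := hμT.trans hαT.symm
  rw [hP, hP2, hT', ← hαT]
  refine ⟨hfit.trans (le_of_eq ?_), hreg.trans (le_of_eq ?_)⟩
  · field_simp
  · field_simp
    ring

/-- Corollary 2 (variation-adapted stepsizes `α = μ = T^{(β−1)/2}`): dynamic fit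
and dynamic regret bounds. -/
theorem mosp_variation_adapted_bounds {n m : ℕ} (hm : 0 < m)
    (T : ℕ) (hT : 1 ≤ T)
    (X : Set (EuclideanSpace ℝ (Fin n))) (hXne : X.Nonempty) (hXconv : Convex ℝ X)
    (R G M ε Vbar α μ : ℝ)
    (hR : ∀ x ∈ X, ∀ y ∈ X, ‖x - y‖ ≤ R)
    (f : ℕ → EuclideanSpace ℝ (Fin n) → ℝ)
    (hfconv : ∀ t, ConvexOn ℝ Set.univ (f t))
    (hfdiff : ∀ t, Differentiable ℝ (f t))
    (hG : ∀ t, ∀ x ∈ X, ‖gradient (f t) x‖ ≤ G)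
    (g : ℕ → EuclideanSpace ℝ (Fin n) → EuclideanSpace ℝ (Fin m))
    (hgconv : ∀ t i, ConvexOn ℝ Set.univ fun x => g t x i)
    (hM : ∀ t, ∀ x ∈ X, ‖g t x‖ ≤ M)
    (hε : 0 < ε)
    (hSlater : ∃ xt ∈ X, ∀ t, ∀ i, g t xt i ≤ -ε)
    (hVbar : 0 ≤ Vbar)
    (hvar : ∀ t, ∀ x ∈ X, ‖posProj (g (t + 1) x - g t x)‖ ≤ Vbar)
    (hεV : Vbar < ε)
    (hα : 0 < α) (hμ : 0 < μ)
    (β : ℝ) (hβ0 : 0 ≤ β) (hβ1 : β < 1)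
    (hαT : α = (T : ℝ) ^ ((β - 1) / 2)) (hμT : μ = (T : ℝ) ^ ((β - 1) / 2))
    (x : ℕ → EuclideanSpace ℝ (Fin n))
    (lam : ℕ → EuclideanSpace ℝ (Fin m))
    (hx0 : x 0 ∈ X) (hlam1 : lam 1 = 0)
    (hprimal : ∀ t, 1 ≤ t → x t ∈ X ∧ ∀ z ∈ X,
      ⟪gradient (f (t - 1)) (x (t - 1)), x t - x (t - 1)⟫ + ⟪lam t, g (t - 1) (x t)⟫ +
          ‖x t - x (t - 1)‖ ^ 2 / (2 * α) ≤
        ⟪gradient (f (t - 1)) (x (t - 1)), z - x (t - 1)⟫ + ⟪lam t, g (t - 1) z⟫ +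
          ‖z - x (t - 1)‖ ^ 2 / (2 * α))
    (hdual : ∀ t, 1 ≤ t → lam (t + 1) = posProj (lam t + μ • g t (x t)))
    (xstar : ℕ → EuclideanSpace ℝ (Fin n))
    (hxstar0 : xstar 0 ∈ X)
    (hxstar : ∀ t, 1 ≤ t → t ≤ T → xstar t ∈ X ∧ (∀ i, g t (xstar t) i ≤ 0) ∧
      ∀ z ∈ X, (∀ i, g t z i ≤ 0) → f t (xstar t) ≤ f t z)
    (v : ℕ → ℝ) (hv : ∀ t, 0 ≤ v t)
    (hvarv : ∀ t, ∀ x ∈ X, ‖posProj (g (t + 1) x - g t x)‖ ≤ v t) :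
    (‖posProj (∑ t ∈ Icc 1 T, g t (x t))‖ ≤
      M + (2 * G * R * (T : ℝ) ^ ((1 - β) / 2) + R ^ 2 / 2 * (T : ℝ) ^ (1 - β) +
        M ^ 2 / 2) / (ε - Vbar)) ∧
    (∑ t ∈ Icc 1 T, f t (x t) - ∑ t ∈ Icc 1 T, f t (xstar t) ≤
      R * (∑ t ∈ Icc 1 T, ‖xstar t - xstar (t - 1)‖) * (T : ℝ) ^ ((1 - β) / 2) +
        (M * (T : ℝ) ^ ((β - 1) / 2) +
          (2 * G * R + R ^ 2 / 2 * (T : ℝ) ^ ((1 - β) / 2) +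
            M ^ 2 / 2 * (T : ℝ) ^ ((β - 1) / 2)) / (ε - Vbar)) *
          (∑ t ∈ Icc 1 T, v t) +
        R ^ 2 / 2 * (T : ℝ) ^ ((1 - β) / 2) + G ^ 2 / 2 * (T : ℝ) ^ ((1 + β) / 2) +
        M ^ 2 / 2 * ((T : ℝ) + 1) * (T : ℝ) ^ ((β - 1) / 2)) :=
  mosp_variation_adapted_bounds_general T hT X hXconv R G M ε Vbar α μ hR f hfconv hfdiff hG g
    hgconv hM hε hSlater hvar hεV hα hμ β hαT hμT x lam hx0 hlam1 hprimal hdual xstar hxstar0 hxstar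
    v hvarv
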